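/- arXiv:2604.01006 — 5 statements merged into one kernel-verified Lean document; each statement's English description precedes it below -/
import Mathlib

section
/- For every x in R^d and every nonzero direction v in R^d, the ℓ∞-halfspace H_v(x) = {y : ∀ δ > 0, ‖y - x‖_∞ ≤ ‖y - (x - δv)‖_∞} equals the union over indices i with v_i ≥ 0 of the positive pyramids P⁺_i(x) = {y : y_i - x_i = ‖y - x‖_∞} together with the union over indices i with v_i ≤ 0 of the negative pyramids P⁻_i(x) = {y : -(y_i - x_i) = ‖y - x‖_∞}. -/
/-- The `s`-pyramid in direction `i` around `x` (ℓ∞-norm). -/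
def Pyr {d : ℕ} (s : ℝ) (i : Fin d) (x : Fin d → ℝ) : Set (Fin d → ℝ) :=
  {y | s * (y i - x i) = ‖y - x‖}

/-- The ℓ∞-halfspace around `x` in direction `v`. -/
def Hsp {d : ℕ} (v x : Fin d → ℝ) : Set (Fin d → ℝ) :=
  {y | ∀ δ : ℝ, 0 < δ → ‖y - x‖ ≤ ‖y - (x - δ • v)‖}

theorem halfspace_pyramid_decomposition {d : ℕ} (x v : Fin d → ℝ) (hv : v ≠ 0) :
    Hsp v x =
      (⋃ i ∈ {i : Fin d | 0 ≤ v i}, Pyr 1 i x) ∪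
      (⋃ i ∈ {i : Fin d | v i ≤ 0}, Pyr (-1) i x) := by
  obtain ⟨i0, hi0⟩ := Function.ne_iff.mp hv
  haveI : Nonempty (Fin d) := ⟨i0⟩
  ext y
  simp only [Hsp, Pyr, Set.mem_setOf_eq, Set.mem_union, Set.mem_iUnion, one_mul, neg_one_mul]
  set w : Fin d → ℝ := y - x with hw
  have hwd : ∀ i, w i = y i - x i := fun i => rfl
  have hsub : ∀ δ : ℝ, y - (x - δ • v) = w + δ • v := by
    intro δ
    rw [hw]
    ext i
    simp [Pi.sub_apply, Pi.add_apply]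
    ring
  have habs : ∀ i, |w i| ≤ ‖w‖ := fun i => by
    simpa [Real.norm_eq_abs] using norm_le_pi_norm w i
  have hadd : ∀ (δ : ℝ) (i : Fin d), (w + δ • v) i = w i + δ * v i := fun δ i => rfl
  constructor
  · intro hy
    by_cases h0 : ‖w‖ = 0
    · have hw0 : w = 0 := norm_eq_zero.mp h0
      have hyi : ∀ i, y i - x i = 0 := by
        intro i; rw [← hwd i, hw0]; rfl
      rcases le_total 0 (v i0) with hvi | hvi
      · exact Or.inl ⟨i0, hvi, by rw [hyi i0, h0]⟩
      · exact Or.inr ⟨i0, hvi, by rw [hyi i0, h0, neg_zero]⟩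
    · have hne : 0 < ‖w‖ := lt_of_le_of_ne (norm_nonneg w) (Ne.symm h0)
      by_contra hcon
      push_neg at hcon
      obtain ⟨hc1, hc2⟩ := hcon
      -- per-index trichotomy
      have tri : ∀ i, |w i| < ‖w‖ ∨ (w i = ‖w‖ ∧ v i < 0) ∨ (w i = -‖w‖ ∧ 0 < v i) := by
        intro i
        rcases lt_or_eq_of_le (habs i) with h | h
        · exact Or.inl h
        · rcases (abs_eq (norm_nonneg w)).mp h with h' | h'
          · refine Or.inr (Or.inl ⟨h', ?_⟩)
            by_contra hvi
            push_neg at hvi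
            exact hc1 i hvi (by rw [← hwd i, h'])
          · refine Or.inr (Or.inr ⟨h', ?_⟩)
            by_contra hvi
            push_neg at hvi
            exact hc2 i hvi (by rw [← hwd i, h']; ring)
      set g : Fin d → ℝ := fun i => if |w i| < ‖w‖ then ‖w‖ - |w i| else ‖w‖ with hg
      have hgpos : ∀ i, 0 < g i := by
        intro i
        rw [hg]
        dsimp only
        split
        · linarith
        · exact hne
      obtain ⟨k, hk⟩ := Finite.exists_min g
      set δ : ℝ := g k / (2 * (‖v‖ + 1)) with hδdef
      have hvpos : (0:ℝ) < ‖v‖ + 1 := by positivity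
      have hδ : 0 < δ := div_pos (hgpos k) (by positivity)
      have hδv : ∀ i, δ * |v i| < g i := by
        intro i
        have h1 : δ * |v i| ≤ δ * (‖v‖ + 1) := by
          apply mul_le_mul_of_nonneg_left _ hδ.le
          have := norm_le_pi_norm v i
          rw [Real.norm_eq_abs] at this
          linarith
        have h2 : δ * (‖v‖ + 1) = g k / 2 := by
          rw [hδdef]; field_simp
        have h3 : g k / 2 < g k := by linarith [hgpos k]
        calc δ * |v i| ≤ δ * (‖v‖ + 1) := h1
          _ = g k / 2 := h2
          _ < g k := h3
          _ ≤ g i := hk i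
      have key : ∀ i, |w i + δ * v i| < ‖w‖ := by
        intro i
        have hdv : |δ * v i| = δ * |v i| := by
          rw [abs_mul, abs_of_pos hδ]
        rcases tri i with h | ⟨h, hvi⟩ | ⟨h, hvi⟩
        · have hgi : g i = ‖w‖ - |w i| := by rw [hg]; simp [h]
          calc |w i + δ * v i| ≤ |w i| + |δ * v i| := abs_add_le _ _
            _ = |w i| + δ * |v i| := by rw [hdv]
            _ < |w i| + g i := by linarith [hδv i]
            _ = ‖w‖ := by rw [hgi]; ring
        · have hgi : g i = ‖w‖ := by
            rw [hg]; simp only [h, abs_of_pos hne, lt_self_iff_false, if_false]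
          have hbd : δ * |v i| < ‖w‖ := hgi ▸ hδv i
          rw [abs_of_neg hvi] at hbd
          have hup : w i + δ * v i < ‖w‖ := by
            have : δ * v i < 0 := mul_neg_of_pos_of_neg hδ hvi
            linarith [h]
          have hlo : -‖w‖ < w i + δ * v i := by nlinarith
          exact abs_lt.mpr ⟨hlo, hup⟩
        · have hgi : g i = ‖w‖ := by
            rw [hg]
            have : |w i| = ‖w‖ := by rw [h, abs_neg, abs_of_pos hne]
            simp [this]
          have hbd : δ * |v i| < ‖w‖ := hgi ▸ hδv i
          rw [abs_of_pos hvi] at hbd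
          have hlo : -‖w‖ < w i + δ * v i := by
            have : 0 < δ * v i := mul_pos hδ hvi
            linarith [h]
          have hup : w i + δ * v i < ‖w‖ := by nlinarith
          exact abs_lt.mpr ⟨hlo, hup⟩
      obtain ⟨m, hm⟩ := Finite.exists_max (fun i => |(w + δ • v) i|)
      have hnorm : ‖w + δ • v‖ ≤ |(w + δ • v) m| := by
        apply (pi_norm_le_iff_of_nonneg (abs_nonneg _)).mpr
        intro i
        rw [Real.norm_eq_abs]
        exact hm i
      have hlt : ‖w + δ • v‖ < ‖w‖ := by
        calc ‖w + δ • v‖ ≤ |(w + δ • v) m| := hnorm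
          _ = |w m + δ * v m| := by rw [hadd]
          _ < ‖w‖ := key m
      have := hy δ hδ
      rw [hsub δ] at this
      linarith
  · rintro (⟨i, hvi, hi⟩ | ⟨i, hvi, hi⟩) <;> intro δ hδ <;> rw [hsub δ]
    · have hwi : w i = ‖w‖ := by rw [hwd i]; exact hi
      have h1 : 0 ≤ δ * v i := mul_nonneg hδ.le hvi
      calc ‖w‖ = w i := hwi.symm
        _ ≤ w i + δ * v i := by linarith
        _ ≤ |w i + δ * v i| := le_abs_self _
        _ = |(w + δ • v) i| := by rw [hadd]
        _ ≤ ‖w + δ • v‖ := by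
            simpa [Real.norm_eq_abs] using norm_le_pi_norm (w + δ • v) i
    · have hwi : -w i = ‖w‖ := by rw [hwd i]; linarith [hi]
      have h1 : δ * v i ≤ 0 := mul_nonpos_of_nonneg_of_nonpos hδ.le hvi
      calc ‖w‖ = -w i := hwi.symm
        _ ≤ -(w i + δ * v i) := by linarith
        _ ≤ |w i + δ * v i| := neg_le_abs _
        _ = |(w + δ • v) i| := by rw [hadd]
        _ ≤ ‖w + δ • v‖ := by
            simpa [Real.norm_eq_abs] using norm_le_pi_norm (w + δ • v) i
end

section
/- Let f : [0,1]^d → [0,1]^d be λ-contracting (λ < 1) with fixed point x*, and let c ∈ [0,1]^d and x ∈ R^d satisfy ‖x - x*‖_∞ ≤ r and ‖x - f(c)‖_∞ ≥ ‖x - c‖_∞. Then ‖c - f(c)‖_∞ ≤ (1+λ)·2r/(1-λ). -/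
theorem approx_fixed_point_bound {d : ℕ} (f : (Fin d → ℝ) → (Fin d → ℝ))
    (lam r : ℝ) (hlam0 : 0 ≤ lam) (hlam1 : lam < 1)
    (hmap : ∀ x ∈ Set.Icc (0 : Fin d → ℝ) 1, f x ∈ Set.Icc (0 : Fin d → ℝ) 1)
    (hcontr : ∀ x ∈ Set.Icc (0 : Fin d → ℝ) 1, ∀ y ∈ Set.Icc (0 : Fin d → ℝ) 1,
      ‖f x - f y‖ ≤ lam * ‖x - y‖)
    (xstar : Fin d → ℝ) (hxstar : xstar ∈ Set.Icc (0 : Fin d → ℝ) 1)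
    (hfix : f xstar = xstar)
    (c : Fin d → ℝ) (hc : c ∈ Set.Icc (0 : Fin d → ℝ) 1)
    (x : Fin d → ℝ) (hxr : ‖x - xstar‖ ≤ r) (hxc : ‖x - c‖ ≤ ‖x - f c‖) :
    ‖c - f c‖ ≤ (1 + lam) * (2 * r) / (1 - lam) := by
  have h1 : ‖xstar - f c‖ ≤ lam * ‖xstar - c‖ := by
    have := hcontr xstar hxstar c hc
    rwa [hfix] at this
  have t1 : ‖c - xstar‖ ≤ ‖c - x‖ + ‖x - xstar‖ := norm_sub_le_norm_sub_add_norm_sub _ _ _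
  have t2 : ‖x - f c‖ ≤ ‖x - xstar‖ + ‖xstar - f c‖ := norm_sub_le_norm_sub_add_norm_sub _ _ _
  have t3 : ‖c - f c‖ ≤ ‖c - xstar‖ + ‖xstar - f c‖ := norm_sub_le_norm_sub_add_norm_sub _ _ _
  have e1 : ‖c - x‖ = ‖x - c‖ := norm_sub_rev _ _
  have e2 : ‖xstar - c‖ = ‖c - xstar‖ := norm_sub_rev _ _
  have hD : (1 - lam) * ‖c - xstar‖ ≤ 2 * r := by nlinarith
  have hpos : 0 < 1 - lam := by linarith
  rw [le_div_iff₀ hpos]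
  nlinarith [norm_nonneg (c - xstar)]
end

section
/- Let f : [0,1]^d → [-ε, 1+ε]^d be non-expansive in the ℓ∞-norm, and let g : [0,1]^d → [0,1]^d be defined by clamping: g(x) = proj_{[0,1]^d}(f(x)). Suppose x ∈ [0,1]^d satisfies ‖x - g(x)‖_∞ ≤ ε/2, and define y ∈ [0,1]^d by y_i = x_i if f_i(x) ∈ [0,1], y_i = 0 if f_i(x) < 0, and y_i = 1 if f_i(x) > 1. Then ‖y - f(y)‖_∞ ≤ ε. -/
theorem nonexp_dagger_to_nonexp {d : ℕ} (f : (Fin d → ℝ) → (Fin d → ℝ)) (ε : ℝ)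
    (hε : 0 < ε)
    (hmap : ∀ z ∈ Set.Icc (0 : Fin d → ℝ) 1, ∀ i, f z i ∈ Set.Icc (-ε) (1 + ε))
    (hnonexp : ∀ z ∈ Set.Icc (0 : Fin d → ℝ) 1, ∀ w ∈ Set.Icc (0 : Fin d → ℝ) 1,
      ‖f z - f w‖ ≤ ‖z - w‖)
    (x : Fin d → ℝ) (hx : x ∈ Set.Icc (0 : Fin d → ℝ) 1)
    (hgx : ‖x - fun i => max 0 (min (f x i) 1)‖ ≤ ε / 2) :
    ‖(fun i => if f x i < 0 then 0 else if 1 < f x i then 1 else x i) -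
      f (fun i => if f x i < 0 then 0 else if 1 < f x i then 1 else x i)‖ ≤ ε := by
  set y : Fin d → ℝ := fun i => if f x i < 0 then 0 else if 1 < f x i then 1 else x i with hy
  obtain ⟨hx0, hx1⟩ := hx
  have hx0' : ∀ i, (0:ℝ) ≤ x i := fun i => hx0 i
  have hx1' : ∀ i, x i ≤ (1:ℝ) := fun i => hx1 i
  have hyI : y ∈ Set.Icc (0 : Fin d → ℝ) 1 := by
    constructor <;> intro i <;> simp only [hy] <;> split_ifs <;>
      simp [hx0' i, hx1' i]
  have hg : ∀ i, ‖x i - max 0 (min (f x i) 1)‖ ≤ ε / 2 := by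
    intro i
    have := le_trans (norm_le_pi_norm (x - fun i => max 0 (min (f x i) 1)) i) hgx
    simpa using this
  have hxy : ‖x - y‖ ≤ ε / 2 := by
    rw [pi_norm_le_iff_of_nonneg (by linarith)]
    intro i
    have h1 := hg i
    simp only [Pi.sub_apply, hy]
    split_ifs with h h'
    · have he : max 0 (min (f x i) 1) = 0 := by
        rw [min_eq_left (le_of_lt (h.trans_le zero_le_one)), max_eq_left h.le]
      rwa [he] at h1
    · have he : max 0 (min (f x i) 1) = 1 := by
        rw [min_eq_right h'.le, max_eq_right zero_le_one]
      rwa [he] at h1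
    · simp; linarith
  have hfxy : ‖f x - f y‖ ≤ ε / 2 :=
    le_trans (hnonexp x ⟨hx0, hx1⟩ y hyI) hxy
  rw [pi_norm_le_iff_of_nonneg hε.le]
  intro i
  have hd : ‖f x i - f y i‖ ≤ ε / 2 := by
    have := le_trans (norm_le_pi_norm (f x - f y) i) hfxy
    simpa using this
  rw [Real.norm_eq_abs, abs_le] at hd
  obtain ⟨hby1, hby2⟩ := hmap y hyI i
  simp only [Pi.sub_apply, hy]
  split_ifs with h h'
  · rw [Real.norm_eq_abs, abs_le]
    constructor <;> linarith
  · rw [Real.norm_eq_abs, abs_le]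
    constructor <;> linarith
  · push_neg at h h'
    have h1 := hg i
    have he : max 0 (min (f x i) 1) = f x i := by
      rw [min_eq_left h', max_eq_right h]
    rw [he, Real.norm_eq_abs, abs_le] at h1
    rw [Real.norm_eq_abs, abs_le]
    constructor <;> linarith
end

section
/- Fix a point x ∈ R^d. If v, w ∈ R^d \ {0} have the same sign pattern (sign(v_i) = sign(w_i) for all i ∈ [d], with sign taking values in {-1,0,+1}), then the ℓ∞-halfspaces H_v(x) and H_w(x) are equal. Consequently, there are at most 3^d - 1 distinct ℓ∞-halfspaces around x. -/
private lemma sign_nonneg_iff' {a : ℝ} : 0 ≤ Real.sign a ↔ 0 ≤ a := by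
  rcases lt_trichotomy a 0 with h | h | h
  · rw [Real.sign_of_neg h]; constructor <;> intro h' <;> linarith
  · simp [h]
  · rw [Real.sign_of_pos h]; constructor <;> intro h' <;> linarith

private lemma sign_nonpos_iff' {a : ℝ} : Real.sign a ≤ 0 ↔ a ≤ 0 := by
  rcases lt_trichotomy a 0 with h | h | h
  · rw [Real.sign_of_neg h]; constructor <;> intro h' <;> linarith
  · simp [h]
  · rw [Real.sign_of_pos h]; constructor <;> intro h' <;> linarith

private lemma sign_sign' (a : ℝ) : Real.sign (Real.sign a) = Real.sign a := by
  rcases lt_trichotomy a 0 with h | h | h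
  · rw [Real.sign_of_neg h]; exact Real.sign_of_neg (by norm_num)
  · simp [h]
  · rw [Real.sign_of_pos h]; exact Real.sign_of_pos (by norm_num)

private lemma mem_Hsp_iff {d : ℕ} {v x y : Fin d → ℝ} (hv : v ≠ 0) :
    y ∈ Hsp v x ↔ ∃ i, (0 ≤ v i ∧ (y - x) i = ‖y - x‖) ∨
      (v i ≤ 0 ∧ -((y - x) i) = ‖y - x‖) := by
  set z : Fin d → ℝ := y - x with hz
  set M : ℝ := ‖z‖ with hM
  have hkey : ∀ δ : ℝ, y - (x - δ • v) = z + δ • v := by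
    intro δ; rw [hz]; abel
  constructor
  · intro h
    by_contra hc
    push_neg at hc
    obtain ⟨i₀, hi₀⟩ : ∃ i, v i ≠ 0 := Function.ne_iff.mp hv
    have hMnn : 0 ≤ M := hM ▸ norm_nonneg z
    rcases hMnn.eq_or_lt with hM0 | hM0
    · -- M = 0 case: z = 0
      have hz0 : z = 0 := norm_eq_zero.mp (by rw [← hM, ← hM0])
      have h1 := (hc i₀).1
      have h2 := (hc i₀).2
      rcases lt_trichotomy (v i₀) 0 with hvi | hvi | hvi
      · exact h2 hvi.le (by simp [hz0, ← hM0])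
      · exact hi₀ hvi
      · exact h1 hvi.le (by simp [hz0, ← hM0])
    · -- M > 0 case
      have habs : ∀ i, |z i| ≤ M := fun i => by
        simpa [Real.norm_eq_abs] using norm_le_pi_norm z i
      have key : ∀ i, ∃ ε > 0, ∀ δ : ℝ, 0 < δ → δ < ε → |z i + δ * v i| < M := by
        intro i
        rcases lt_or_eq_of_le (habs i) with hlt | heq
        · refine ⟨(M - |z i|) / (|v i| + 1), div_pos (by linarith) (by positivity), fun δ hδ hδε => ?_⟩
          have h1 : |z i + δ * v i| ≤ |z i| + δ * |v i| := by
            calc |z i + δ * v i| ≤ |z i| + |δ * v i| := abs_add_le _ _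
              _ = |z i| + δ * |v i| := by rw [abs_mul, abs_of_pos hδ]
          have h2 : δ * (|v i| + 1) < M - |z i| := by
            calc δ * (|v i| + 1) < (M - |z i|) / (|v i| + 1) * (|v i| + 1) := by
                  apply mul_lt_mul_of_pos_right hδε; positivity
              _ = M - |z i| := by field_simp
          nlinarith [abs_nonneg (v i)]
        · rcases (abs_eq hMnn).mp heq with hzi | hzi
          · -- z i = M, so v i < 0
            have hvi : v i < 0 := by
              by_contra hvi; push_neg at hvi
              exact (hc i).1 hvi hzi
            refine ⟨2 * M / (-v i), div_pos (by linarith) (by linarith), fun δ hδ hδε => ?_⟩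
            have h1 : δ * (-v i) < 2 * M := by
              calc δ * (-v i) < 2 * M / (-v i) * (-v i) :=
                    mul_lt_mul_of_pos_right hδε (by linarith)
                _ = 2 * M := div_mul_cancel₀ _ (by linarith)
            rw [abs_lt]
            constructor <;> nlinarith
          · -- z i = -M, so v i > 0
            have hvi : 0 < v i := by
              by_contra hvi; push_neg at hvi
              exact (hc i).2 hvi (by rw [hzi]; ring)
            refine ⟨2 * M / v i, div_pos (by linarith) hvi, fun δ hδ hδε => ?_⟩
            have h1 : δ * v i < 2 * M := by
              calc δ * v i < 2 * M / v i * v i :=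
                    mul_lt_mul_of_pos_right hδε hvi
                _ = 2 * M := div_mul_cancel₀ _ (ne_of_gt hvi)
            rw [abs_lt]
            constructor <;> nlinarith
      choose ε hε1 hε2 using key
      have hne : (Finset.univ : Finset (Fin d)).Nonempty := ⟨i₀, Finset.mem_univ _⟩
      set δ : ℝ := Finset.univ.inf' hne ε / 2 with hδdef
      have hinfpos : 0 < Finset.univ.inf' hne ε :=
        (Finset.lt_inf'_iff hne).mpr fun i _ => hε1 i
      have hδpos : 0 < δ := by positivity
      have hδlt : ∀ i, δ < ε i := fun i => by
        have := Finset.inf'_le ε (Finset.mem_univ i)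
        rw [hδdef]; linarith
      have hlt : ‖z + δ • v‖ < M := by
        rw [pi_norm_lt_iff hM0]
        intro i
        have := hε2 i δ hδpos (hδlt i)
        simpa [Real.norm_eq_abs] using this
      have := h δ hδpos
      rw [hkey δ] at this
      linarith
  · rintro ⟨i, ⟨hvi, hzi⟩ | ⟨hvi, hzi⟩⟩ δ hδ
    · rw [hkey δ]
      calc M = z i := hzi.symm
        _ ≤ z i + δ * v i := by nlinarith
        _ ≤ |z i + δ * v i| := le_abs_self _
        _ ≤ ‖z + δ • v‖ := by
            simpa [Real.norm_eq_abs] using norm_le_pi_norm (z + δ • v) i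
    · rw [hkey δ]
      calc M = -(z i) := hzi.symm
        _ ≤ -(z i + δ * v i) := by nlinarith
        _ ≤ |z i + δ * v i| := neg_le_abs _
        _ ≤ ‖z + δ • v‖ := by
            simpa [Real.norm_eq_abs] using norm_le_pi_norm (z + δ • v) i

theorem halfspaces_by_sign_pattern {d : ℕ} (x : Fin d → ℝ) :
    (∀ v w : Fin d → ℝ, v ≠ 0 → w ≠ 0 →
      (∀ i, Real.sign (v i) = Real.sign (w i)) → Hsp v x = Hsp w x) ∧
    {H : Set (Fin d → ℝ) | ∃ v : Fin d → ℝ, v ≠ 0 ∧ H = Hsp v x}.Finite ∧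
    {H : Set (Fin d → ℝ) | ∃ v : Fin d → ℝ, v ≠ 0 ∧ H = Hsp v x}.ncard ≤ 3 ^ d - 1 := by
  classical
  have hsign : ∀ v w : Fin d → ℝ, v ≠ 0 → w ≠ 0 →
      (∀ i, Real.sign (v i) = Real.sign (w i)) → Hsp v x = Hsp w x := by
    intro v w hv hw hs
    ext y
    rw [mem_Hsp_iff hv, mem_Hsp_iff hw]
    constructor <;> rintro ⟨i, h⟩ <;> refine ⟨i, ?_⟩ <;>
    · have h1 : (0 ≤ v i) ↔ (0 ≤ w i) := by
        rw [← sign_nonneg_iff' (a := v i), hs i, sign_nonneg_iff']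
      have h2 : (v i ≤ 0) ↔ (w i ≤ 0) := by
        rw [← sign_nonpos_iff' (a := v i), hs i, sign_nonpos_iff']
      tauto
  refine ⟨hsign, ?_⟩
  set F : Finset (Fin d → ℝ) := Fintype.piFinset (fun _ => ({-1, 0, 1} : Finset ℝ)) with hF
  have h0F : (0 : Fin d → ℝ) ∈ F := by
    rw [hF, Fintype.mem_piFinset]; intro i; simp
  have hsub : {H : Set (Fin d → ℝ) | ∃ v : Fin d → ℝ, v ≠ 0 ∧ H = Hsp v x} ⊆
      (fun s => Hsp s x) '' ((F.erase 0 : Finset (Fin d → ℝ)) : Set (Fin d → ℝ)) := by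
    rintro H ⟨v, hv, rfl⟩
    obtain ⟨i₀, hi₀⟩ : ∃ i, v i ≠ 0 := Function.ne_iff.mp hv
    have hsne : (fun i => Real.sign (v i)) ≠ 0 := by
      intro hcon
      exact hi₀ (Real.sign_eq_zero_iff.mp (congrFun hcon i₀))
    refine ⟨fun i => Real.sign (v i), ?_, ?_⟩
    · rw [Finset.mem_coe, Finset.mem_erase]
      refine ⟨hsne, ?_⟩
      rw [hF, Fintype.mem_piFinset]
      intro i
      rcases Real.sign_apply_eq (v i) with h | h | h <;> simp [h]
    · exact (hsign v (fun i => Real.sign (v i)) hv hsne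
        (fun i => (sign_sign' (v i)).symm)).symm
  have hfin : {H : Set (Fin d → ℝ) | ∃ v : Fin d → ℝ, v ≠ 0 ∧ H = Hsp v x}.Finite :=
    Set.Finite.subset (Set.Finite.image _ (F.erase 0).finite_toSet) hsub
  refine ⟨hfin, ?_⟩
  have hcard3 : ({-1, 0, 1} : Finset ℝ).card = 3 := by
    rw [Finset.card_insert_of_notMem (by norm_num),
        Finset.card_insert_of_notMem (by norm_num), Finset.card_singleton]
  have hFcard : F.card = 3 ^ d := by
    rw [hF, Fintype.card_piFinset]
    simp [hcard3]
  calc {H : Set (Fin d → ℝ) | ∃ v : Fin d → ℝ, v ≠ 0 ∧ H = Hsp v x}.ncard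
      ≤ ((fun s => Hsp s x) '' ((F.erase 0 : Finset (Fin d → ℝ)) :
          Set (Fin d → ℝ))).ncard :=
        Set.ncard_le_ncard hsub (Set.Finite.image _ (F.erase 0).finite_toSet)
    _ ≤ ((F.erase 0 : Finset (Fin d → ℝ)) : Set (Fin d → ℝ)).ncard :=
        Set.ncard_image_le (F.erase 0).finite_toSet
    _ = (F.erase 0).card := Set.ncard_coe_finset _
    _ = F.card - 1 := Finset.card_erase_of_mem h0F
    _ = 3 ^ d - 1 := by rw [hFcard]
end

section
/- Let δ_1,...,δ_d be reals with δ_i ≥ 0 for i ≤ k and δ_i ≤ 0 for i > k, Σ_{i=1}^d δ_i = 0, and Σ_{i≤k} δ_i ≤ γ/2 for some γ ≥ 0. Let π_1 ≥ ... ≥ π_d with π_k - π_{k+1} ≥ γ, and set π'_i = π_i - δ_i and V = Σπ_i = Σπ'_i. Then Σ_i (π_i - V/d)² - Σ_i (π'_i - V/d)² ≥ 2γ·(Σ_{i≤k} δ_i) - γ²/2. -/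
theorem potential_decrease (d k : ℕ) (hk1 : 1 ≤ k) (hkd : k < d)
    (δ π : ℕ → ℝ) (γ V : ℝ) (hγ0 : 0 ≤ γ)
    (hδpos : ∀ i ∈ Finset.Icc 1 k, 0 ≤ δ i)
    (hδneg : ∀ i ∈ Finset.Icc (k + 1) d, δ i ≤ 0)
    (hδsum : ∑ i ∈ Finset.Icc 1 d, δ i = 0)
    (hδbound : ∑ i ∈ Finset.Icc 1 k, δ i ≤ γ / 2)
    (hmono : ∀ i ∈ Finset.Icc 1 d, ∀ j ∈ Finset.Icc 1 d, i ≤ j → π j ≤ π i)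
    (hgap : γ ≤ π k - π (k + 1))
    (hV : V = ∑ i ∈ Finset.Icc 1 d, π i) :
    2 * γ * (∑ i ∈ Finset.Icc 1 k, δ i) - γ ^ 2 / 2 ≤
      ∑ i ∈ Finset.Icc 1 d, (π i - V / d) ^ 2 -
        ∑ i ∈ Finset.Icc 1 d, (π i - δ i - V / d) ^ 2 := by
  set S := ∑ i ∈ Finset.Icc 1 k, δ i with hS
  have hkd' : k ≤ d := hkd.le
  -- rewrite intervals as Ioc
  have hIcc1 : ∀ n : ℕ, Finset.Icc 1 n = Finset.Ioc 0 n := fun n => Finset.Icc_add_one_left_eq_Ioc 0 n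
  have hIcck : Finset.Icc (k+1) d = Finset.Ioc k d := Finset.Icc_add_one_left_eq_Ioc k d
  have hsplit : ∀ f : ℕ → ℝ, ∑ i ∈ Finset.Icc 1 d, f i =
      (∑ i ∈ Finset.Icc 1 k, f i) + ∑ i ∈ Finset.Icc (k+1) d, f i := by
    intro f
    rw [hIcc1, hIcc1, hIcck]
    exact (Finset.sum_Ioc_consecutive f (Nat.zero_le k) hkd').symm
  have hS0 : 0 ≤ S := Finset.sum_nonneg hδpos
  have hSneg : ∑ i ∈ Finset.Icc (k+1) d, δ i = -S := by
    have := hsplit δ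
    rw [hδsum] at this
    linarith
  -- membership facts
  have hmemk : ∀ i ∈ Finset.Icc 1 k, i ∈ Finset.Icc 1 d := by
    intro i hi
    simp only [Finset.mem_Icc] at *
    exact ⟨hi.1, hi.2.trans hkd'⟩
  have hmemk' : ∀ i ∈ Finset.Icc (k+1) d, i ∈ Finset.Icc 1 d := by
    intro i hi
    simp only [Finset.mem_Icc] at *
    exact ⟨le_trans (Nat.le_add_left 1 k) hi.1, hi.2⟩
  have hkmem : k ∈ Finset.Icc 1 d := by simp [Finset.mem_Icc, hk1, hkd']
  have hk1mem : k + 1 ∈ Finset.Icc 1 d := by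
    simp [Finset.mem_Icc]; omega
  -- bound Σ δ π
  have hA : π k * S ≤ ∑ i ∈ Finset.Icc 1 k, δ i * π i := by
    rw [hS, Finset.mul_sum]
    apply Finset.sum_le_sum
    intro i hi
    have h1 : π k ≤ π i := by
      refine hmono i (hmemk i hi) k hkmem ?_
      exact (Finset.mem_Icc.mp hi).2
    have := hδpos i hi
    nlinarith
  have hB : π (k+1) * (-S) ≤ ∑ i ∈ Finset.Icc (k+1) d, δ i * π i := by
    rw [← hSneg, Finset.mul_sum]
    apply Finset.sum_le_sum
    intro i hi
    have h1 : π i ≤ π (k+1) := by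
      refine hmono (k+1) hk1mem i (hmemk' i hi) ?_
      exact (Finset.mem_Icc.mp hi).1
    have := hδneg i hi
    nlinarith
  have hdp : γ * S ≤ ∑ i ∈ Finset.Icc 1 d, δ i * π i := by
    rw [hsplit (fun i => δ i * π i)]
    nlinarith [hA, hB]
  -- bound Σ δ²
  have hsq1 : ∑ i ∈ Finset.Icc 1 k, (δ i) ^ 2 ≤ S ^ 2 :=
    Finset.sum_sq_le_sq_sum_of_nonneg hδpos
  have hsq2 : ∑ i ∈ Finset.Icc (k+1) d, (δ i) ^ 2 ≤ S ^ 2 := by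
    have h := Finset.sum_sq_le_sq_sum_of_nonneg
      (s := Finset.Icc (k+1) d) (f := fun i => -δ i)
      (fun i hi => neg_nonneg.mpr (hδneg i hi))
    simp only [neg_sq] at h
    calc ∑ i ∈ Finset.Icc (k+1) d, (δ i) ^ 2 ≤ (∑ i ∈ Finset.Icc (k+1) d, -δ i) ^ 2 := h
      _ = S ^ 2 := by rw [Finset.sum_neg_distrib, hSneg]; ring
  have hsq : ∑ i ∈ Finset.Icc 1 d, (δ i) ^ 2 ≤ γ ^ 2 / 2 := by
    rw [hsplit (fun i => (δ i) ^ 2)]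
    nlinarith [hsq1, hsq2]
  -- expand the difference
  have hexp : ∑ i ∈ Finset.Icc 1 d, (π i - V / d) ^ 2 -
        ∑ i ∈ Finset.Icc 1 d, (π i - δ i - V / d) ^ 2 =
      2 * (∑ i ∈ Finset.Icc 1 d, δ i * π i) - 2 * (V / d) * (∑ i ∈ Finset.Icc 1 d, δ i)
        - ∑ i ∈ Finset.Icc 1 d, (δ i) ^ 2 := by
    rw [← Finset.sum_sub_distrib, Finset.mul_sum, Finset.mul_sum, ← Finset.sum_sub_distrib,
      ← Finset.sum_sub_distrib]
    apply Finset.sum_congr rfl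
    intro i _
    ring
  rw [hexp, hδsum]
  nlinarith [hdp, hsq]
end
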